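/- arXiv:2603.28084 — 4 statements merged into one kernel-verified Lean document; each statement's English description precedes it below -/
import Mathlib

section
/- Fix nonnegative integers a, v, d with a + v ≤ d. Let t = d - v - a and consider variables x_t, x_{t+1}, …, x_{d-v} and a parameter ħ. Then ∑_{k=t}^{d-v} ∏_{j=t, j≠k}^{d-v} (ħ - x_j + x_k)/(x_j - x_k) = (-1)^a (a+1). -/
open Polynomial Finset in
private lemma coeff_interp {F : Type*} [Field F] {ι : Type*} [DecidableEq ι]
    (s : Finset ι) (v : ι → F) (hvs : Set.InjOn v s) (r : ι → F) :
    (Lagrange.interpolate s v r).coeff (s.card - 1) =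
      ∑ i ∈ s, r i * Lagrange.nodalWeight s v i := by
  rw [Lagrange.interpolate_apply, Polynomial.finset_sum_coeff]
  refine Finset.sum_congr rfl fun i hi => ?_
  rw [Polynomial.coeff_C_mul]
  congr 1
  have hdeg := Lagrange.natDegree_basis hvs hi
  have h1 : (Lagrange.basis s v i).coeff (s.card - 1) = (Lagrange.basis s v i).leadingCoeff := by
    rw [Polynomial.leadingCoeff, hdeg]
  rw [h1, Lagrange.basis, Polynomial.leadingCoeff_prod]
  unfold Lagrange.nodalWeight
  refine Finset.prod_congr rfl fun j hj => ?_
  rw [Lagrange.basisDivisor, Polynomial.leadingCoeff_mul, Polynomial.leadingCoeff_C,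
    (Polynomial.monic_X_sub_C _).leadingCoeff, mul_one]

-- key identity
open Polynomial Finset in
private lemma key {ι : Type*} [DecidableEq ι] (s : Finset ι) (v : ι → ℂ)
    (hvs : Set.InjOn v s) (h : ℂ) :
    ∑ k ∈ s, ∏ j ∈ s.erase k, ((v k - v j + h) * (v k - v j)⁻¹) = (s.card : ℂ) := by
  rcases eq_or_ne h 0 with rfl | hh
  · rw [Finset.card_eq_sum_ones s]
    push_cast
    refine Finset.sum_congr rfl fun k hk => ?_
    refine Finset.prod_eq_one fun j hj => ?_
    have hne : v k - v j ≠ 0 := by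
      rw [sub_ne_zero]
      exact fun he => (Finset.mem_erase.mp hj).1 (hvs (Finset.mem_of_mem_erase hj) hk he.symm)
    rw [add_zero, mul_inv_cancel₀ hne]
  · rcases s.eq_empty_or_nonempty with rfl | hs
    · simp
    have hs0 : 0 < s.card := hs.card_pos
    set G : ℂ[X] := Lagrange.nodal s (fun j => v j - h) with hG
    set N : ℂ[X] := Lagrange.nodal s v with hN
    set D : ℂ[X] := G - N with hD
    have hdegG : G.degree = s.card := Lagrange.degree_nodal
    have hdegD : D.degree < (s.card : ℕ) := by
      rw [hD, ← hdegG]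
      refine Polynomial.degree_sub_lt ?_ Lagrange.nodal_ne_zero ?_
      · rw [hdegG, hN, Lagrange.degree_nodal]
      · rw [Lagrange.nodal_monic.leadingCoeff, Lagrange.nodal_monic.leadingCoeff]
    have hinterp := Lagrange.eq_interpolate hvs hdegD
    have hcoeff := congrArg (fun p : ℂ[X] => p.coeff (s.card - 1)) hinterp
    rw [coeff_interp s v hvs] at hcoeff
    -- evaluate D at nodes
    have heval : ∀ k ∈ s, D.eval (v k) = h * ∏ j ∈ s.erase k, (v k - v j + h) := by
      intro k hk
      rw [hD, Polynomial.eval_sub, hN, Lagrange.eval_nodal_at_node hk, sub_zero, hG,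
        Lagrange.eval_nodal, ← Finset.mul_prod_erase _ _ hk,
        show v k - (v k - h) = h by ring]
      congr 1
      exact Finset.prod_congr rfl fun j _ => by ring
    -- coefficient of D at card - 1
    have hcD : D.coeff (s.card - 1) = s.card * h := by
      have hcG : G.coeff (s.card - 1) = -∑ j ∈ s, (v j - h) := by
        rw [hG, Lagrange.nodal_eq]
        have hnd : (∏ i ∈ s, (X - C (v i - h))).natDegree = s.card := by
          rw [← Lagrange.nodal_eq]; exact Lagrange.natDegree_nodal
        have h2 := Polynomial.prod_X_sub_C_nextCoeff (s := s) (fun j => v j - h)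
        rwa [Polynomial.nextCoeff_of_natDegree_pos (by rw [hnd]; exact hs0), hnd] at h2
      have hcN : N.coeff (s.card - 1) = -∑ j ∈ s, v j := by
        rw [hN, Lagrange.nodal_eq]
        have hnd : (∏ i ∈ s, (X - C (v i))).natDegree = s.card := by
          rw [← Lagrange.nodal_eq]; exact Lagrange.natDegree_nodal
        have h2 := Polynomial.prod_X_sub_C_nextCoeff (s := s) v
        rwa [Polynomial.nextCoeff_of_natDegree_pos (by rw [hnd]; exact hs0), hnd] at h2
      rw [hD, Polynomial.coeff_sub, hcG, hcN, Finset.sum_sub_distrib, Finset.sum_const,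
        nsmul_eq_mul]
      ring
    have hsum : (s.card : ℂ) * h = ∑ k ∈ s, (h * ∏ j ∈ s.erase k, (v k - v j + h)) *
        Lagrange.nodalWeight s v k := by
      rw [← hcD, hcoeff]
      exact Finset.sum_congr rfl fun k hk => by rw [heval k hk]
    apply mul_left_cancel₀ hh
    rw [Finset.mul_sum]
    calc ∑ k ∈ s, h * ∏ j ∈ s.erase k, ((v k - v j + h) * (v k - v j)⁻¹)
        = ∑ k ∈ s, (h * ∏ j ∈ s.erase k, (v k - v j + h)) * Lagrange.nodalWeight s v k := by
          refine Finset.sum_congr rfl fun k hk => ?_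
          rw [Finset.prod_mul_distrib, Lagrange.nodalWeight]
          ring
      _ = h * (s.card : ℂ) := by rw [← hsum]; ring

/-- For `a + v ≤ d` and `t = d - v - a`,
`∑_{k=t}^{d-v} ∏_{j=t, j≠k}^{d-v} (hbar - xⱼ + x_k)/(xⱼ - x_k) = (-1)^a (a+1)`,
provided the variables `x_t, …, x_{d-v}` are pairwise distinct. -/
theorem stmt3 (a v d : ℕ) (h : a + v ≤ d) (x : ℕ → ℂ) (hbar : ℂ)
    (hdist : ∀ i ∈ Finset.Icc (d - v - a) (d - v), ∀ j ∈ Finset.Icc (d - v - a) (d - v),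
      i ≠ j → x i ≠ x j) :
    ∑ k ∈ Finset.Icc (d - v - a) (d - v),
        ∏ j ∈ (Finset.Icc (d - v - a) (d - v)).erase k, (hbar - x j + x k) / (x j - x k) =
      (-1) ^ a * (a + 1) := by
  set s : Finset ℕ := Finset.Icc (d - v - a) (d - v) with hs
  have hcard : s.card = a + 1 := by
    rw [hs, Nat.card_Icc]; omega
  have hinj : Set.InjOn x s := by
    intro i hi j hj hij
    by_contra hne
    exact hdist i (Finset.mem_coe.mp hi) j (Finset.mem_coe.mp hj) hne hij
  have herase : ∀ k ∈ s, (s.erase k).card = a := fun k hk => by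
    rw [Finset.card_erase_of_mem hk, hcard]; omega
  have hterm : ∀ k ∈ s, ∏ j ∈ s.erase k, (hbar - x j + x k) / (x j - x k)
      = (-1 : ℂ) ^ a * ∏ j ∈ s.erase k, ((x k - x j + hbar) * (x k - x j)⁻¹) := by
    intro k hk
    rw [← herase k hk, ← Finset.prod_const, ← Finset.prod_mul_distrib]
    refine Finset.prod_congr rfl fun j hj => ?_
    rw [div_eq_mul_inv, show x j - x k = -(x k - x j) by ring, inv_neg]
    ring
  rw [Finset.sum_congr rfl hterm, ← Finset.mul_sum, key s x hinj hbar, hcard]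
  push_cast
  ring
end

section
/- Let φ(x) = 1 + ħ/x. For pairwise distinct variables x_r, x_s, x_t, the following rational function identity holds: φ(x_s-x_r)φ(x_t-x_r)φ(x_t-x_s) + φ(x_s-x_r)φ(x_t-x_r)φ(x_s-x_t) - 2φ(x_t-x_s)φ(x_s-x_r) - 2φ(x_s-x_t)φ(x_t-x_r) + φ(x_t-x_s) + φ(x_s-x_t) = 0. -/
/-!
Put `a = xₛ - x_r` and `b = xₜ - xₛ`, so that `xₜ - x_r = a + b` and `xₛ - xₜ = -b`. Since
`φ(b) + φ(-b) = 2`, expanding the products leaves `2ħ²` times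
`1/(a(a+b)) - 1/(ab) + 1/(b(a+b))`, which vanishes by the partial fraction decomposition of
`1/(ab)`.
-/

theorem inv_mul_inv_eq_partial_fractions {K : Type*} [Field K] {a b : K}
    (ha : a ≠ 0) (hb : b ≠ 0) (hab : a + b ≠ 0) :
    a⁻¹ * b⁻¹ = a⁻¹ * (a + b)⁻¹ + b⁻¹ * (a + b)⁻¹ := by
  field_simp
  ring

theorem phi_serre_identity {K : Type*} [Field K] (ħ a b : K)
    (ha : a ≠ 0) (hb : b ≠ 0) (hab : a + b ≠ 0) :
    let φ : K → K := fun x => 1 + ħ / x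
    φ a * φ (a + b) * φ b + φ a * φ (a + b) * φ (-b)
      - 2 * φ b * φ a - 2 * φ (-b) * φ (a + b) + φ b + φ (-b) = 0 := by
  intro φ
  simp only [φ]
  linear_combination (-2 * ħ ^ 2) * inv_mul_inv_eq_partial_fractions ha hb hab

/-- With `φ(x) = 1 + ħ/x` and pairwise distinct `x_r, x_s, x_t`:
`φ(xₛ-x_r)φ(xₜ-x_r)φ(xₜ-xₛ) + φ(xₛ-x_r)φ(xₜ-x_r)φ(xₛ-xₜ) - 2φ(xₜ-xₛ)φ(xₛ-x_r)
 - 2φ(xₛ-xₜ)φ(xₜ-x_r) + φ(xₜ-xₛ) + φ(xₛ-xₜ) = 0`. -/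
theorem stmt8 (hbar xr xs xt : ℂ) (hsr : xs ≠ xr) (htr : xt ≠ xr) (hts : xt ≠ xs) :
    (let φ : ℂ → ℂ := (fun x => 1 + hbar / x);
     φ (xs - xr) * φ (xt - xr) * φ (xt - xs) + φ (xs - xr) * φ (xt - xr) * φ (xs - xt)
       - 2 * φ (xt - xs) * φ (xs - xr) - 2 * φ (xs - xt) * φ (xt - xr)
       + φ (xt - xs) + φ (xs - xt) = 0) := by
  have hsum : xs - xr + (xt - xs) = xt - xr := sub_add_sub_cancel' xs xr xt
  have h := phi_serre_identity hbar (xs - xr) (xt - xs) (sub_ne_zero.2 hsr) (sub_ne_zero.2 hts)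
    (hsum ▸ sub_ne_zero.2 htr)
  rwa [hsum, neg_sub] at h
end

section
/- For 1 ≤ i ≤ 2n set τi = 2n+1-i, and for a palindromic tuple v ∈ Λ_{c,d} define H_{i,v}(u) = (1 - (δ_{i,n} - δ_{i,n+1})ħ/(4u)) · Φ_{[v]_i}(-u - (n-i)ħ/2 - ħ/4) · Φ_{[v]_{τi}}(u + (n-i)ħ/2 + ħ/4), where Φ_I(z) = ∏_{s∈I} (1 + ħ/(x_s - z)). Then H_{τi,v}(-u) = H_{i,v}(u). -/
/-! The reflection `k ↦ 2n+1-k` is an involution that negates the shift `c k` and the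
coefficient `δ_{k,n} - δ_{k,n+1}`; hence replacing `(i, u)` by `(τi, -u)` fixes the prefactor
and merely swaps the two `Φ`-factors. -/

theorem shift_reflect {K : Type*} [Field K] [CharZero K] (n i : ℕ) (hi : i ≤ 2 * n + 1)
    (hbar : K) :
    ((n : K) - ((2 * n + 1 - i : ℕ) : K)) * hbar / 2 + hbar / 4 =
      -(((n : K) - i) * hbar / 2 + hbar / 4) := by
  rw [Nat.cast_sub hi]
  push_cast
  field_simp
  ring

theorem deltaDiff_reflect {R : Type*} [Ring R] (n i : ℕ) (hi : i ≤ 2 * n + 1) :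
    ((if 2 * n + 1 - i = n then 1 else 0) - (if 2 * n + 1 - i = n + 1 then 1 else 0) : R) =
      -((if i = n then 1 else 0) - (if i = n + 1 then 1 else 0)) := by
  have hn : 2 * n + 1 - i = n ↔ i = n + 1 := by omega
  have hn1 : 2 * n + 1 - i = n + 1 ↔ i = n := by omega
  simp only [hn, hn1, neg_sub]

theorem stmt12_general (n i : ℕ) (hi2 : i ≤ 2 * n)
    (v : ℕ → ℕ)
    (x : ℕ → ℂ)
    (hbar u : ℂ) :
    (let vbar : ℕ → ℕ := (fun k => ∑ l ∈ Finset.Icc 1 k, v l);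
     let I : ℕ → Finset ℕ := (fun k => Finset.Icc (vbar (k - 1) + 1) (vbar k));
     let Φ : Finset ℕ → ℂ → ℂ := (fun S z => ∏ s ∈ S, (1 + hbar / (x s - z)));
     let c : ℕ → ℂ := (fun k => ((n : ℂ) - (k : ℂ)) * hbar / 2 + hbar / 4);
     let H : ℕ → ℂ → ℂ := (fun k w =>
       (1 - (((if k = n then 1 else 0) - (if k = n + 1 then 1 else 0) : ℂ)) * hbar / (4 * w)) *
         Φ (I k) (-w - c k) * Φ (I (2 * n + 1 - k)) (w + c k));
     H (2 * n + 1 - i) (-u) = H i u) := by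
  intro vbar I Φ c H
  have hi : i ≤ 2 * n + 1 := by omega
  have hτ : 2 * n + 1 - (2 * n + 1 - i) = i := Nat.sub_sub_self hi
  have hc : c (2 * n + 1 - i) = -c i := shift_reflect n i hi hbar
  simp only [H, hτ, hc, deltaDiff_reflect n i hi, neg_neg, mul_neg, neg_mul, neg_div_neg_eq,
    sub_neg_eq_add, ← sub_eq_add_neg]
  exact mul_right_comm _ _ _

/-- For `1 ≤ i ≤ 2n`, `τi = 2n+1-i`, and a palindromic `v ∈ Λ_{c,d}`, the generating
function `H_{i,v}(u) = (1 - (δ_{i,n} - δ_{i,n+1})ħ/(4u)) Φ_{[v]_i}(-u - cᵢ) Φ_{[v]_{τi}}(u + cᵢ)`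
(with `cᵢ = (n-i)ħ/2 + ħ/4` and `Φ_I(z) = ∏_{s∈I}(1 + ħ/(xₛ - z))`) satisfies
`H_{τi,v}(-u) = H_{i,v}(u)`, where `x_r = -x_{2d+1-r}`. -/
theorem stmt12 (n d i : ℕ) (hi1 : 1 ≤ i) (hi2 : i ≤ 2 * n)
    (v : ℕ → ℕ) (hpal : ∀ k, 1 ≤ k → k ≤ 2 * n + 1 → v k = v (2 * n + 2 - k))
    (hsum : ∑ k ∈ Finset.Icc 1 (2 * n + 1), v k = 2 * d)
    (x : ℕ → ℂ) (hx : ∀ r, 1 ≤ r → r ≤ 2 * d → x r = - x (2 * d + 1 - r))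
    (hbar u : ℂ) :
    (let vbar : ℕ → ℕ := (fun k => ∑ l ∈ Finset.Icc 1 k, v l);
     let I : ℕ → Finset ℕ := (fun k => Finset.Icc (vbar (k - 1) + 1) (vbar k));
     let Φ : Finset ℕ → ℂ → ℂ := (fun S z => ∏ s ∈ S, (1 + hbar / (x s - z)));
     let c : ℕ → ℂ := (fun k => ((n : ℂ) - (k : ℂ)) * hbar / 2 + hbar / 4);
     let H : ℕ → ℂ → ℂ := (fun k w =>
       (1 - (((if k = n then 1 else 0) - (if k = n + 1 then 1 else 0) : ℂ)) * hbar / (4 * w)) *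
         Φ (I k) (-w - c k) * Φ (I (2 * n + 1 - k)) (w + c k));
     H (2 * n + 1 - i) (-u) = H i u) :=
  stmt12_general n i hi2 v x hbar u
end

section
/- Let φ(x) = 1 + ħ/x. Then ((u² - v² + ħ²/2) - (v + x + ħ/4)(x + ħ/4) + v(v + x + ħ/4)) · (1 - φ(x-u-ħ/4)φ(-x-u-ħ/4)φ(x+u+ħ/4)^{-1}) + (-ħ(3u/2 + v/2) + (ħ/2)(v + x + ħ/4)) · (1 + φ(x-u-ħ/4)φ(-x-u-ħ/4)φ(x+u+ħ/4)^{-1}) = 0 identically as rational functions in u, v, x, ħ. -/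
/-- With `φ(x) = 1 + ħ/x` and `P = φ(x-u-ħ/4)φ(-x-u-ħ/4)φ(x+u+ħ/4)⁻¹`, the identity
`((u²-v²+ħ²/2) - (v+x+ħ/4)(x+ħ/4) + v(v+x+ħ/4))(1 - P)
 + (-ħ(3u/2+v/2) + (ħ/2)(v+x+ħ/4))(1 + P) = 0`
holds (as rational functions, i.e. wherever the denominators are nonzero). -/
theorem stmt17 (hbar u v x : ℂ)
    (h1 : x - u - hbar / 4 ≠ 0) (h2 : -x - u - hbar / 4 ≠ 0)
    (h3 : x + u + hbar / 4 ≠ 0) (h4 : x + u + hbar / 4 + hbar ≠ 0) :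
    (let φ : ℂ → ℂ := (fun w => 1 + hbar / w);
     ((u ^ 2 - v ^ 2 + hbar ^ 2 / 2) - (v + x + hbar / 4) * (x + hbar / 4)
           + v * (v + x + hbar / 4)) *
         (1 - φ (x - u - hbar / 4) * φ (-x - u - hbar / 4) * (φ (x + u + hbar / 4))⁻¹)
       + (-(hbar * (3 * u / 2 + v / 2)) + hbar / 2 * (v + x + hbar / 4)) *
         (1 + φ (x - u - hbar / 4) * φ (-x - u - hbar / 4) * (φ (x + u + hbar / 4))⁻¹)
       = 0) := by
  simp only
  have e1 : 1 + hbar / (x - u - hbar / 4) = (x - u - hbar / 4 + hbar) / (x - u - hbar / 4) := by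
    exact one_add_div h1
  have e2 : 1 + hbar / (-x - u - hbar / 4) = (-x - u - hbar / 4 + hbar) / (-x - u - hbar / 4) := by
    exact one_add_div h2
  have e3 : 1 + hbar / (x + u + hbar / 4) = (x + u + hbar / 4 + hbar) / (x + u + hbar / 4) := by
    exact one_add_div h3
  rw [e1, e2, e3, inv_div, div_mul_div_comm, div_mul_div_comm]
  have hM : (x - u - hbar / 4) * (-x - u - hbar / 4) * (x + u + hbar / 4 + hbar) ≠ 0 :=
    mul_ne_zero (mul_ne_zero h1 h2) h4
  rw [one_sub_div hM, one_add_div hM, ← mul_div_assoc, ← mul_div_assoc, ← add_div,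
    div_eq_zero_iff]
  left
  ring
end
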